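/- arXiv:2104.05247 — 8 statements merged into one kernel-verified Lean document; each statement's English description precedes it below -/
import Mathlib

section
/- Let A = U1 S1 V1ᵀ ∈ ℝ^{m×n}, where U1 ∈ ℝ^{m×r}, S1 ∈ ℝ^{r×r} is invertible, and V1 ∈ ℝ^{n×r} has orthonormal columns (V1ᵀ V1 = I_r). Let V0 ∈ ℝ^{n×r} be such that V1ᵀ V0 ∈ ℝ^{r×r} is invertible. Then the column space of A V0 equals the column space of A, i.e., the range of the linear map x ↦ (A V0) x equals the range of y ↦ A y. -/
open Matrix

lemma range_mul_of_surjective {m r s : ℕ}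
    (B : Matrix (Fin m) (Fin r) ℝ) (C : Matrix (Fin r) (Fin s) ℝ)
    (hC : Function.Surjective C.mulVecLin) :
    LinearMap.range (B * C).mulVecLin = LinearMap.range B.mulVecLin := by
  rw [Matrix.mulVecLin_mul, LinearMap.range_comp,
    LinearMap.range_eq_top.mpr hC, Submodule.map_top]

/-- Range identity (Lemma 1 of Ceruti–Lubich 2021): for `A = U₁ S₁ V₁ᵀ` with `S₁`
invertible, `V₁` with orthonormal columns, and `V₁ᵀ V₀` invertible, the column space
of `A V₀` equals the column space of `A`. -/
theorem range_K_eq_range_A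
    {m n r : ℕ}
    (U1 : Matrix (Fin m) (Fin r) ℝ) (S1 : Matrix (Fin r) (Fin r) ℝ)
    (V1 V0 : Matrix (Fin n) (Fin r) ℝ)
    (A : Matrix (Fin m) (Fin n) ℝ)
    (hA : A = U1 * S1 * V1ᵀ)
    (hS1 : IsUnit S1)
    (hV1 : V1ᵀ * V1 = 1)
    (hV10 : IsUnit (V1ᵀ * V0)) :
    LinearMap.range (A * V0).mulVecLin = LinearMap.range A.mulVecLin := by
  have hVt : Function.Surjective (V1ᵀ).mulVecLin := by
    intro y
    refine ⟨V1.mulVecLin y, ?_⟩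
    show V1ᵀ *ᵥ (V1 *ᵥ y) = y
    rw [Matrix.mulVec_mulVec, hV1, Matrix.one_mulVec]
  have e1 : A * V0 = (U1 * S1) * (V1ᵀ * V0) := by rw [hA, Matrix.mul_assoc]
  have e2 : A = (U1 * S1) * V1ᵀ := by rw [hA]
  rw [e1, range_mul_of_surjective _ _
        (Matrix.mulVec_surjective_iff_isUnit.mpr hV10),
      e2, range_mul_of_surjective _ _ hVt]
end

section
/- Let A1 = U1 S1 V1ᵀ ∈ ℝ^{m×n} with S1 ∈ ℝ^{r×r} invertible and V1 ∈ ℝ^{n×r} having orthonormal columns, and let V0 ∈ ℝ^{n×r} be such that V1ᵀ V0 is invertible. Let U0 ∈ ℝ^{m×r} be arbitrary, and let Û ∈ ℝ^{m×k} have orthonormal columns with column space equal to the column space of the concatenated matrix (A1 V0 | U0) ∈ ℝ^{m×2r}. Then Û Ûᵀ A1 = A1. -/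
/-!
Since `V₁ᵀ V₀` is invertible, `A₁ = A₁ V₀ (V₁ᵀ V₀)⁻¹ V₁ᵀ`, so the column space of `A₁` lies in
that of `A₁ V₀`, hence in that of `(A₁ V₀ | U₀)`, which is the column space of `Û`. Writing
`A₁ = Û W`, orthonormality gives `Û Ûᵀ A₁ = Û (Ûᵀ Û) W = Û W = A₁`.
-/

open Matrix

namespace Matrix

variable {R : Type*} [CommRing R] {l m n p : Type*} [Fintype m] [Fintype n] [Fintype p]

theorem range_mulVecLin_mul_le (A : Matrix l m R) (B : Matrix m n R) :
    LinearMap.range (A * B).mulVecLin ≤ LinearMap.range A.mulVecLin := by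
  rw [mulVecLin_mul]
  exact LinearMap.range_comp_le_range _ _

theorem range_mulVecLin_le_fromCols_left (A : Matrix l m R) (B : Matrix l n R) :
    LinearMap.range A.mulVecLin ≤ LinearMap.range (fromCols A B).mulVecLin := by
  rintro _ ⟨v, rfl⟩
  exact ⟨Sum.elim v 0, by simp⟩

theorem exists_mul_eq_of_range_mulVecLin_le {A : Matrix l n R} {U : Matrix l m R}
    (h : LinearMap.range A.mulVecLin ≤ LinearMap.range U.mulVecLin) :
    ∃ W : Matrix m n R, A = U * W := by
  have hcol : ∀ j, ∃ w, U *ᵥ w = A.col j := fun j =>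
    h (by rw [range_mulVecLin]; exact Submodule.subset_span ⟨j, rfl⟩)
  choose W hW using hcol
  refine ⟨(of W)ᵀ, ?_⟩
  ext i j
  simpa [mulVec, dotProduct, mul_apply] using (congrFun (hW j) i).symm

theorem mul_transpose_mul_eq_self_of_range_le [Fintype l] [DecidableEq m] {U : Matrix l m R} (hU : Uᵀ * U = 1)
    {A : Matrix l n R} (h : LinearMap.range A.mulVecLin ≤ LinearMap.range U.mulVecLin) :
    U * Uᵀ * A = A := by
  obtain ⟨W, rfl⟩ := exists_mul_eq_of_range_mulVecLin_le h
  rw [Matrix.mul_assoc, ← Matrix.mul_assoc Uᵀ, hU, Matrix.one_mul]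

theorem eq_mul_mul_nonsing_inv_mul_of_eq_mul [DecidableEq p] {A : Matrix l m R}
    {B : Matrix l p R} {C : Matrix p m R} {D : Matrix m p R} (hA : A = B * C)
    (hCD : IsUnit (C * D)) : A = A * D * ((C * D)⁻¹ * C) := by
  have hinv : C * D * (C * D)⁻¹ = 1 := mul_nonsing_inv _ ((isUnit_iff_isUnit_det _).mp hCD)
  calc A = B * (C * D * (C * D)⁻¹) * C := by rw [hinv, Matrix.mul_one, hA]
    _ = A * D * ((C * D)⁻¹ * C) := by simp only [hA, Matrix.mul_assoc]

end Matrix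

theorem augmented_basis_reproduces_A_general
    {m n r k : ℕ}
    (U1 : Matrix (Fin m) (Fin r) ℝ) (S1 : Matrix (Fin r) (Fin r) ℝ)
    (V1 V0 : Matrix (Fin n) (Fin r) ℝ)
    (A1 : Matrix (Fin m) (Fin n) ℝ)
    (U0 : Matrix (Fin m) (Fin r) ℝ)
    (Uhat : Matrix (Fin m) (Fin k) ℝ)
    (hA1 : A1 = U1 * S1 * V1ᵀ)
    (hV10 : IsUnit (V1ᵀ * V0))
    (hUhat : Uhatᵀ * Uhat = 1)
    (hrange : LinearMap.range Uhat.mulVecLin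
      = LinearMap.range (fromCols (A1 * V0) U0).mulVecLin) :
    Uhat * Uhatᵀ * A1 = A1 := by
  have hfac := eq_mul_mul_nonsing_inv_mul_of_eq_mul hA1 hV10
  apply mul_transpose_mul_eq_self_of_range_le hUhat
  calc LinearMap.range A1.mulVecLin
      = LinearMap.range (A1 * V0 * ((V1ᵀ * V0)⁻¹ * V1ᵀ)).mulVecLin := by rw [← hfac]
    _ ≤ LinearMap.range (A1 * V0).mulVecLin := range_mulVecLin_mul_le _ _
    _ ≤ LinearMap.range (fromCols (A1 * V0) U0).mulVecLin :=
        range_mulVecLin_le_fromCols_left _ _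
    _ = LinearMap.range Uhat.mulVecLin := hrange.symm

/-- Identity (11) in the exactness proof: the augmented orthonormal basis `Û`, spanning the
column space of `(A₁ V₀ | U₀)`, reproduces `A₁` under projection: `Û Ûᵀ A₁ = A₁`. -/
theorem augmented_basis_reproduces_A
    {m n r k : ℕ}
    (U1 : Matrix (Fin m) (Fin r) ℝ) (S1 : Matrix (Fin r) (Fin r) ℝ)
    (V1 V0 : Matrix (Fin n) (Fin r) ℝ)
    (A1 : Matrix (Fin m) (Fin n) ℝ)
    (U0 : Matrix (Fin m) (Fin r) ℝ)
    (Uhat : Matrix (Fin m) (Fin k) ℝ)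
    (hA1 : A1 = U1 * S1 * V1ᵀ)
    (hS1 : IsUnit S1)
    (hV1 : V1ᵀ * V1 = 1)
    (hV10 : IsUnit (V1ᵀ * V0))
    (hUhat : Uhatᵀ * Uhat = 1)
    (hrange : LinearMap.range Uhat.mulVecLin
      = LinearMap.range (fromCols (A1 * V0) U0).mulVecLin) :
    Uhat * Uhatᵀ * A1 = A1 :=
  augmented_basis_reproduces_A_general U1 S1 V1 V0 A1 U0 Uhat hA1 hV10 hUhat hrange
end

section
/- Let A : ℝ → ℝ^{m×n} be differentiable with derivative A'(t). Let Û ∈ ℝ^{m×k} and V̂ ∈ ℝ^{n×k} have orthonormal columns and satisfy Û Ûᵀ A(t1) = A(t1) and A(t1) V̂ V̂ᵀ = A(t1). Let Ŝ : ℝ → ℝ^{k×k} be differentiable with Ŝ(t0) = Ûᵀ A(t0) V̂ and Ŝ'(t) = Ûᵀ A'(t) V̂ for all t ∈ [t0, t1]. Then Û Ŝ(t1) V̂ᵀ = A(t1), i.e., the Galerkin step reproduces A(t1) exactly. -/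
/-!
`Ŝ` and `Ûᵀ A V̂` have the same derivative `Ûᵀ A' V̂` on `[t₀, t₁]` and the same value at `t₀`,
so they agree at `t₁`; the projection conditions then turn `Û (Ûᵀ A(t₁) V̂) V̂ᵀ` back into `A(t₁)`.
-/

open Matrix Set

namespace Matrix

variable {l m n o : Type*}

theorem eq_of_hasDerivAt_apply_eq {F G F' : ℝ → Matrix m n ℝ} {a b : ℝ} (hab : a ≤ b)
    (hF : ∀ t ∈ Icc a b, ∀ i j, HasDerivAt (fun s => F s i j) (F' t i j) t)
    (hG : ∀ t ∈ Icc a b, ∀ i j, HasDerivAt (fun s => G s i j) (F' t i j) t)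
    (ha : F a = G a) : F b = G b := by
  ext i j
  exact eq_of_has_deriv_right_eq
    (fun t ht => (hF t (Ico_subset_Icc_self ht) i j).hasDerivWithinAt)
    (fun t ht => (hG t (Ico_subset_Icc_self ht) i j).hasDerivWithinAt)
    (fun t ht => (hF t ht i j).continuousAt.continuousWithinAt)
    (fun t ht => (hG t ht i j).continuousAt.continuousWithinAt)
    (congrFun₂ ha i j) b (right_mem_Icc.2 hab)

theorem hasDerivAt_mul_mul_apply [Fintype m] [Fintype n] {A A' : ℝ → Matrix m n ℝ} {t : ℝ}
    (hA : ∀ p q, HasDerivAt (fun s => A s p q) (A' t p q) t)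
    (B : Matrix l m ℝ) (C : Matrix n o ℝ) (i : l) (j : o) :
    HasDerivAt (fun s => (B * A s * C) i j) ((B * A' t * C) i j) t := by
  simp only [mul_apply]
  exact HasDerivAt.fun_sum fun q _ =>
    (HasDerivAt.fun_sum fun p _ => (hA p q).const_mul (B i p)).mul_const (C q j)

end Matrix

theorem galerkin_step_exact_general
    {m n k : ℕ} {t0 t1 : ℝ}
    (A : ℝ → Matrix (Fin m) (Fin n) ℝ) (A' : ℝ → Matrix (Fin m) (Fin n) ℝ)
    (Uhat : Matrix (Fin m) (Fin k) ℝ) (Vhat : Matrix (Fin n) (Fin k) ℝ)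
    (Shat : ℝ → Matrix (Fin k) (Fin k) ℝ)
    (ht : t0 ≤ t1)
    (hA : ∀ t ∈ Set.Icc t0 t1, ∀ i j, HasDerivAt (fun s => A s i j) (A' t i j) t)
    (hUA : Uhat * Uhatᵀ * A t1 = A t1)
    (hAV : A t1 * Vhat * Vhatᵀ = A t1)
    (hS0 : Shat t0 = Uhatᵀ * A t0 * Vhat)
    (hS : ∀ t ∈ Set.Icc t0 t1, ∀ i j,
      HasDerivAt (fun s => Shat s i j) ((Uhatᵀ * A' t * Vhat) i j) t) :
    Uhat * Shat t1 * Vhatᵀ = A t1 := by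
  have hS1 : Shat t1 = Uhatᵀ * A t1 * Vhat :=
    eq_of_hasDerivAt_apply_eq (F' := fun t => Uhatᵀ * A' t * Vhat) ht hS
      (fun t ht => hasDerivAt_mul_mul_apply (hA t ht) Uhatᵀ Vhat) hS0
  calc Uhat * Shat t1 * Vhatᵀ = Uhat * Uhatᵀ * A t1 * Vhat * Vhatᵀ := by
        simp only [hS1, Matrix.mul_assoc]
    _ = A t1 := by rw [hUA, hAV]

/-- Exactness (Theorem 1): if `Û Ûᵀ A(t₁) = A(t₁)` and `A(t₁) V̂ V̂ᵀ = A(t₁)` and `Ŝ` solves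
the S-step ODE with right-hand side `Ûᵀ A'(t) V̂` and initial value `Ûᵀ A(t₀) V̂`, then the
Galerkin step reproduces `A(t₁)` exactly: `Û Ŝ(t₁) V̂ᵀ = A(t₁)`. -/
theorem galerkin_step_exact
    {m n k : ℕ} {t0 t1 : ℝ}
    (A : ℝ → Matrix (Fin m) (Fin n) ℝ) (A' : ℝ → Matrix (Fin m) (Fin n) ℝ)
    (Uhat : Matrix (Fin m) (Fin k) ℝ) (Vhat : Matrix (Fin n) (Fin k) ℝ)
    (Shat : ℝ → Matrix (Fin k) (Fin k) ℝ)
    (ht : t0 ≤ t1)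
    (hA : ∀ t ∈ Set.Icc t0 t1, ∀ i j, HasDerivAt (fun s => A s i j) (A' t i j) t)
    (hU : Uhatᵀ * Uhat = 1) (hV : Vhatᵀ * Vhat = 1)
    (hUA : Uhat * Uhatᵀ * A t1 = A t1)
    (hAV : A t1 * Vhat * Vhatᵀ = A t1)
    (hS0 : Shat t0 = Uhatᵀ * A t0 * Vhat)
    (hS : ∀ t ∈ Set.Icc t0 t1, ∀ i j,
      HasDerivAt (fun s => Shat s i j) ((Uhatᵀ * A' t * Vhat) i j) t) :
    Uhat * Shat t1 * Vhatᵀ = A t1 :=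
  galerkin_step_exact_general A A' Uhat Vhat Shat ht hA hUA hAV hS0 hS
end

section
/- Let F : ℝ × ℝ^{m×n} → ℝ^{m×n} satisfy ⟨Y, F(t, Y)⟩_F = 0 for all Y ∈ ℝ^{m×n} and all t. Let Û ∈ ℝ^{m×k} and V̂ ∈ ℝ^{n×k} have orthonormal columns, and let S : ℝ → ℝ^{k×k} be differentiable on [t0, t1] with S'(t) = Ûᵀ F(t, Û S(t) V̂ᵀ) V̂ for all t ∈ [t0, t1]. Then ‖S(t)‖_F = ‖S(t0)‖_F for all t ∈ [t0, t1]. -/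
open Matrix

/-- The Frobenius inner product `⟨A, B⟩_F = trace(Aᵀ B)`. -/
noncomputable def frobInner {m n : ℕ} (A B : Matrix (Fin m) (Fin n) ℝ) : ℝ :=
  (Aᵀ * B).trace

/-- The Frobenius norm `‖A‖_F = ⟨A, A⟩_F^{1/2}`. -/
noncomputable def frobNorm {m n : ℕ} (A : Matrix (Fin m) (Fin n) ℝ) : ℝ :=
  Real.sqrt (frobInner A A)

/-! The derivative of `‖S(t)‖_F²` is `2 ⟨S, S'⟩_F = 2 ⟨Û S V̂ᵀ, F(t, Û S V̂ᵀ)⟩_F`, moving `Ûᵀ` and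
`V̂` across the inner product; this vanishes by the hypothesis on `F`, so `‖S(t)‖_F` is constant. -/

lemma frobInner_eq_sum {m n : ℕ} (A B : Matrix (Fin m) (Fin n) ℝ) :
    frobInner A B = ∑ j, ∑ i, A i j * B i j := by
  simp [frobInner, Matrix.trace, Matrix.mul_apply]

lemma frobInner_transpose_mul_mul {m n p q : ℕ} (S : Matrix (Fin p) (Fin q) ℝ)
    (U : Matrix (Fin m) (Fin p) ℝ) (V : Matrix (Fin n) (Fin q) ℝ) (G : Matrix (Fin m) (Fin n) ℝ) :
    frobInner S (Uᵀ * G * V) = frobInner (U * S * Vᵀ) G := by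
  unfold frobInner
  rw [← Matrix.mul_assoc, ← Matrix.mul_assoc, Matrix.trace_mul_comm]
  simp only [Matrix.transpose_mul, Matrix.transpose_transpose, Matrix.mul_assoc]

lemma hasDerivAt_frobInner_self {p q : ℕ} {S : ℝ → Matrix (Fin p) (Fin q) ℝ}
    {D : Matrix (Fin p) (Fin q) ℝ} {t : ℝ} (hS : ∀ i j, HasDerivAt (fun s => S s i j) (D i j) t) :
    HasDerivAt (fun s => frobInner (S s) (S s)) (2 * frobInner (S t) D) t := by
  simp only [frobInner_eq_sum, Finset.mul_sum]
  refine HasDerivAt.fun_sum fun j _ => HasDerivAt.fun_sum fun i _ => ?_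
  exact ((hS i j).fun_mul (hS i j)).congr_deriv (by ring)

theorem sStep_norm_preservation_general
    {m n k : ℕ} {t0 t1 : ℝ}
    (F : ℝ → Matrix (Fin m) (Fin n) ℝ → Matrix (Fin m) (Fin n) ℝ)
    (hF : ∀ t Y, frobInner Y (F t Y) = 0)
    (Uhat : Matrix (Fin m) (Fin k) ℝ) (Vhat : Matrix (Fin n) (Fin k) ℝ)
    (S : ℝ → Matrix (Fin k) (Fin k) ℝ)
    (hS : ∀ t ∈ Set.Icc t0 t1, ∀ i j,
      HasDerivAt (fun s => S s i j) ((Uhatᵀ * F t (Uhat * S t * Vhatᵀ) * Vhat) i j) t) :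
    ∀ t ∈ Set.Icc t0 t1, frobNorm (S t) = frobNorm (S t0) := by
  have hderiv : ∀ s ∈ Set.Icc t0 t1, HasDerivAt (fun s => frobInner (S s) (S s)) 0 s := by
    intro s hs
    simpa [frobInner_transpose_mul_mul, hF] using hasDerivAt_frobInner_self (hS s hs)
  have hconst : ∀ t ∈ Set.Icc t0 t1, frobInner (S t) (S t) = frobInner (S t0) (S t0) :=
    constant_of_has_deriv_right_zero
      (fun x hx => (hderiv x hx).continuousAt.continuousWithinAt)
      (fun x hx => (hderiv x (Set.mem_Icc_of_Ico hx)).hasDerivWithinAt)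
  intro t ht
  rw [frobNorm, frobNorm, hconst t ht]

/-- Core of the norm-preservation theorem (Theorem 4): if `⟨Y, F(t,Y)⟩_F = 0` for all `Y, t`,
then the Galerkin S-step preserves the Frobenius norm of `S`. -/
theorem sStep_norm_preservation
    {m n k : ℕ} {t0 t1 : ℝ}
    (F : ℝ → Matrix (Fin m) (Fin n) ℝ → Matrix (Fin m) (Fin n) ℝ)
    (hF : ∀ t Y, frobInner Y (F t Y) = 0)
    (Uhat : Matrix (Fin m) (Fin k) ℝ) (Vhat : Matrix (Fin n) (Fin k) ℝ)
    (hU : Uhatᵀ * Uhat = 1) (hV : Vhatᵀ * Vhat = 1)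
    (S : ℝ → Matrix (Fin k) (Fin k) ℝ)
    (hS : ∀ t ∈ Set.Icc t0 t1, ∀ i j,
      HasDerivAt (fun s => S s i j) ((Uhatᵀ * F t (Uhat * S t * Vhatᵀ) * Vhat) i j) t) :
    ∀ t ∈ Set.Icc t0 t1, frobNorm (S t) = frobNorm (S t0) :=
  sStep_norm_preservation_general F hF Uhat Vhat S hS
end

section
/- Let f : ℝ^{m×n} → ℝ be continuously differentiable, and let G : ℝ^{m×n} → ℝ^{m×n} denote its Frobenius gradient, i.e., the Fréchet derivative of f at Y applied to a direction X equals ⟨G(Y), X⟩_F for all X. Let Û ∈ ℝ^{m×k}, V̂ ∈ ℝ^{n×k} have orthonormal columns, and let Ŝ : ℝ → ℝ^{k×k} be differentiable on [t0, t1] with Ŝ'(t) = −Ûᵀ G(Ŷ(t)) V̂ where Ŷ(t) = Û Ŝ(t) V̂ᵀ. Then for all t ∈ [t0, t1], d/dt f(Ŷ(t)) = −‖Ûᵀ G(Ŷ(t)) V̂‖_F², and consequently f(Ŷ(t1)) ≤ f(Ŷ(t0)) − (t1 − t0) · α², where α = min_{t ∈ [t0, t1]} ‖Ûᵀ G(Ŷ(t))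 V̂‖_F. -/
open Matrix

attribute [local instance] Matrix.frobeniusSeminormedAddCommGroup
  Matrix.frobeniusNormedAddCommGroup Matrix.frobeniusNormedSpace

/-! Pulled back to the core matrix, the chain rule gives
`d/dt f(Û S V̂ᵀ) = ⟨Ûᵀ G(Ŷ) V̂, Ṡ⟩_F`, since `S ↦ Ûᵀ S V̂` is the Frobenius adjoint of
`S ↦ Û S V̂ᵀ`; along the Galerkin flow `Ṡ = -Ûᵀ G(Ŷ) V̂` this is `-‖Ûᵀ G(Ŷ) V̂‖_F²`, and the
mean value theorem turns the pointwise bound `≤ -α²` into the decrease over `[t₀, t₁]`. -/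

section Frobenius

variable {m n : ℕ}

theorem frobInner_self_nonneg (A : Matrix (Fin m) (Fin n) ℝ) : 0 ≤ frobInner A A :=
  show 0 ≤ ∑ j, ∑ i, A i j * A i j from
    Finset.sum_nonneg fun _ _ => Finset.sum_nonneg fun _ _ => mul_self_nonneg _

theorem frobNorm_nonneg (A : Matrix (Fin m) (Fin n) ℝ) : 0 ≤ frobNorm A := Real.sqrt_nonneg _

theorem frobNorm_sq (A : Matrix (Fin m) (Fin n) ℝ) : frobNorm A ^ 2 = frobInner A A :=
  Real.sq_sqrt (frobInner_self_nonneg A)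

theorem frobInner_neg_right (A B : Matrix (Fin m) (Fin n) ℝ) :
    frobInner A (-B) = -frobInner A B := by
  simp only [frobInner, Matrix.mul_neg, Matrix.trace_neg]

theorem frobInner_mul_mul_transpose {k l : ℕ} (G : Matrix (Fin m) (Fin n) ℝ)
    (U : Matrix (Fin m) (Fin k) ℝ) (S : Matrix (Fin k) (Fin l) ℝ) (V : Matrix (Fin n) (Fin l) ℝ) :
    frobInner G (U * S * Vᵀ) = frobInner (Uᵀ * G * V) S := by
  simp only [frobInner, Matrix.transpose_mul, Matrix.transpose_transpose]
  rw [← Matrix.mul_assoc, ← Matrix.mul_assoc, Matrix.trace_mul_comm, ← Matrix.mul_assoc]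

end Frobenius

theorem Matrix.hasDerivAt_of_hasDerivAt_apply {ι κ : Type*} [Fintype ι] [Fintype κ]
    {S : ℝ → Matrix ι κ ℝ} {S' : Matrix ι κ ℝ} {t : ℝ}
    (h : ∀ i j, HasDerivAt (fun s => S s i j) (S' i j) t) : HasDerivAt S S' t := by
  have hpi : HasDerivAt (fun s => (S s : ι → κ → ℝ)) (S' : ι → κ → ℝ) t :=
    hasDerivAt_pi.2 fun i => hasDerivAt_pi.2 (h i)
  -- transfer from the sup norm on `ι → κ → ℝ` to the Frobenius norm on `Matrix ι κ ℝ`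
  exact (LinearMap.id : (ι → κ → ℝ) →ₗ[ℝ] Matrix ι κ ℝ).toContinuousLinearMap.hasFDerivAt
    |>.comp_hasDerivAt t hpi

theorem HasDerivAt.matrix_mul_mul {ι κ μ ν : Type*} [Fintype ι] [Fintype κ] [Fintype μ]
    [Fintype ν] {S : ℝ → Matrix κ μ ℝ} {S' : Matrix κ μ ℝ} {t : ℝ} (hS : HasDerivAt S S' t)
    (A : Matrix ι κ ℝ) (B : Matrix μ ν ℝ) :
    HasDerivAt (fun s => A * S s * B) (A * S' * B) t :=
  (mulRightLinearMap ι ℝ B ∘ₗ mulLeftLinearMap μ ℝ A).toContinuousLinearMap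
    |>.hasFDerivAt.comp_hasDerivAt t hS

theorem HasDerivAt.comp_mul_mul_transpose {m n k l : ℕ} {f : Matrix (Fin m) (Fin n) ℝ → ℝ}
    {f' : Matrix (Fin m) (Fin n) ℝ →L[ℝ] ℝ} {G : Matrix (Fin m) (Fin n) ℝ}
    {U : Matrix (Fin m) (Fin k) ℝ} {V : Matrix (Fin n) (Fin l) ℝ}
    {S : ℝ → Matrix (Fin k) (Fin l) ℝ} {S' : Matrix (Fin k) (Fin l) ℝ} {t : ℝ}
    (hS : HasDerivAt S S' t) (hf : HasFDerivAt f f' (U * S t * Vᵀ))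
    (hgrad : ∀ X, f' X = frobInner G X) :
    HasDerivAt (fun s => f (U * S s * Vᵀ)) (frobInner (Uᵀ * G * V) S') t := by
  rw [← frobInner_mul_mul_transpose, ← hgrad]
  exact hf.comp_hasDerivAt t (hS.matrix_mul_mul U Vᵀ)

theorem image_sub_le_mul_sub_of_hasDerivAt_le {φ φ' : ℝ → ℝ} {a b C : ℝ} (hab : a ≤ b)
    (hφ : ∀ t ∈ Set.Icc a b, HasDerivAt φ (φ' t) t) (hle : ∀ t ∈ Set.Icc a b, φ' t ≤ C) :
    φ b - φ a ≤ C * (b - a) := by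
  refine (convex_Icc a b).image_sub_le_mul_sub_of_deriv_le
    (fun t ht => (hφ t ht).continuousAt.continuousWithinAt) (fun t ht => ?_) (fun t ht => ?_)
    a (Set.left_mem_Icc.2 hab) b (Set.right_mem_Icc.2 hab) hab
  all_goals rw [interior_Icc] at ht
  · exact (hφ t (Set.Ioo_subset_Icc_self ht)).differentiableAt.differentiableWithinAt
  · exact (hφ t (Set.Ioo_subset_Icc_self ht)).deriv ▸ hle t (Set.Ioo_subset_Icc_self ht)

theorem sq_iInf_le_sq {ι : Sort*} {g : ι → ℝ} (hg : ∀ i, 0 ≤ g i) (i : ι) :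
    (⨅ j, g j) ^ 2 ≤ g i ^ 2 :=
  pow_le_pow_left₀ (Real.iInf_nonneg hg) (ciInf_le ⟨0, Set.forall_mem_range.2 hg⟩ i) 2

theorem sStep_gradient_decrease_general
    {m n k : ℕ} {t0 t1 : ℝ}
    (f : Matrix (Fin m) (Fin n) ℝ → ℝ)
    (G : Matrix (Fin m) (Fin n) ℝ → Matrix (Fin m) (Fin n) ℝ)
    (hf : Differentiable ℝ f)
    (hgrad : ∀ Y X, fderiv ℝ f Y X = frobInner (G Y) X)
    (Uhat : Matrix (Fin m) (Fin k) ℝ) (Vhat : Matrix (Fin n) (Fin k) ℝ)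
    (Shat : ℝ → Matrix (Fin k) (Fin k) ℝ)
    (Yhat : ℝ → Matrix (Fin m) (Fin n) ℝ)
    (hYhat : ∀ t, Yhat t = Uhat * Shat t * Vhatᵀ)
    (ht : t0 ≤ t1)
    (hS : ∀ t ∈ Set.Icc t0 t1, ∀ i j,
      HasDerivAt (fun s => Shat s i j) ((-(Uhatᵀ * G (Yhat t) * Vhat)) i j) t)
    (α : ℝ)
    (hα : α = ⨅ t : Set.Icc t0 t1, frobNorm (Uhatᵀ * G (Yhat ↑t) * Vhat)) :
    (∀ t ∈ Set.Icc t0 t1,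
      HasDerivAt (fun s => f (Yhat s)) (-(frobNorm (Uhatᵀ * G (Yhat t) * Vhat)) ^ 2) t)
    ∧ f (Yhat t1) ≤ f (Yhat t0) - (t1 - t0) * α ^ 2 := by
  obtain rfl : Yhat = fun t => Uhat * Shat t * Vhatᵀ := funext hYhat
  beta_reduce at hS hα ⊢
  have hderiv : ∀ t ∈ Set.Icc t0 t1, HasDerivAt (fun s => f (Uhat * Shat s * Vhatᵀ))
      (-(frobNorm (Uhatᵀ * G (Uhat * Shat t * Vhatᵀ) * Vhat)) ^ 2) t := by
    intro t hmem
    have hStep := (Matrix.hasDerivAt_of_hasDerivAt_apply (hS t hmem)).comp_mul_mul_transpose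
      (hf _).hasFDerivAt (hgrad (Uhat * Shat t * Vhatᵀ))
    rwa [frobInner_neg_right, ← frobNorm_sq] at hStep
  refine ⟨hderiv, ?_⟩
  have hmin := sq_iInf_le_sq fun t : Set.Icc t0 t1 =>
    frobNorm_nonneg (Uhatᵀ * G (Uhat * Shat t * Vhatᵀ) * Vhat)
  have hslope : ∀ t ∈ Set.Icc t0 t1,
      -(frobNorm (Uhatᵀ * G (Uhat * Shat t * Vhatᵀ) * Vhat)) ^ 2 ≤ -α ^ 2 := fun t hmem =>
    hα ▸ neg_le_neg (hmin ⟨t, hmem⟩)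
  linarith [image_sub_le_mul_sub_of_hasDerivAt_le ht hderiv hslope]

/-- Key estimate in the proof of Theorem 5: along the Galerkin S-step of the gradient system,
`d/dt f(Ŷ(t)) = -‖Ûᵀ G(Ŷ(t)) V̂‖_F²`, and hence
`f(Ŷ(t₁)) ≤ f(Ŷ(t₀)) - (t₁ - t₀)·α²` with `α = min_{t ∈ [t₀,t₁]} ‖Ûᵀ G(Ŷ(t)) V̂‖_F`. -/
theorem sStep_gradient_decrease
    {m n k : ℕ} {t0 t1 : ℝ}
    (f : Matrix (Fin m) (Fin n) ℝ → ℝ)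
    (G : Matrix (Fin m) (Fin n) ℝ → Matrix (Fin m) (Fin n) ℝ)
    (hf : Differentiable ℝ f)
    (hG : Continuous G)
    (hgrad : ∀ Y X, fderiv ℝ f Y X = frobInner (G Y) X)
    (Uhat : Matrix (Fin m) (Fin k) ℝ) (Vhat : Matrix (Fin n) (Fin k) ℝ)
    (hU : Uhatᵀ * Uhat = 1) (hV : Vhatᵀ * Vhat = 1)
    (Shat : ℝ → Matrix (Fin k) (Fin k) ℝ)
    (Yhat : ℝ → Matrix (Fin m) (Fin n) ℝ)
    (hYhat : ∀ t, Yhat t = Uhat * Shat t * Vhatᵀ)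
    (ht : t0 ≤ t1)
    (hS : ∀ t ∈ Set.Icc t0 t1, ∀ i j,
      HasDerivAt (fun s => Shat s i j) ((-(Uhatᵀ * G (Yhat t) * Vhat)) i j) t)
    (α : ℝ)
    (hα : α = ⨅ t : Set.Icc t0 t1, frobNorm (Uhatᵀ * G (Yhat ↑t) * Vhat)) :
    (∀ t ∈ Set.Icc t0 t1,
      HasDerivAt (fun s => f (Yhat s)) (-(frobNorm (Uhatᵀ * G (Yhat t) * Vhat)) ^ 2) t)
    ∧ f (Yhat t1) ≤ f (Yhat t0) - (t1 - t0) * α ^ 2 :=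
  sStep_gradient_decrease_general f G hf hgrad Uhat Vhat Shat Yhat hYhat ht hS α hα
end

section
/- Let H : ℂ^{m×n} → ℂ^{m×n} be a linear map that is self-adjoint with respect to the complex Frobenius inner product: ⟨H[Y], Z⟩ = ⟨Y, H[Z]⟩ for all Y, Z ∈ ℂ^{m×n}. Let Û ∈ ℂ^{m×k} and V̂ ∈ ℂ^{n×k} satisfy Û*Û = I_k and V̂*V̂ = I_k, and let S : ℝ → ℂ^{k×k} be differentiable on [t0, t1] with S'(t) = −i Û* H[Û S(t) V̂*] V̂. Then with Ŷ(t) = Û S(t) V̂*, the energy E(Ŷ(t)) = ⟨Ŷ(t), H[Ŷ(t)]⟩ is constant on [t0, t1]. -/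
/-!
Along the S-step the Galerkin trajectory `Ŷ = Û S V̂ᴴ` moves with velocity `Û (-i P) V̂ᴴ`, where
`P = Ûᴴ H[Ŷ] V̂` is the Galerkin projection of `H[Ŷ]`. Since `H` is self-adjoint, the energy
derivative is `⟨Ŷ', H[Ŷ]⟩ + ⟨H[Ŷ], Ŷ'⟩`, and moving `Û`, `V̂ᴴ` to the other side turns it into
`⟨-i P, P⟩ + ⟨P, -i P⟩ = (i - i) ‖P‖² = 0`.
-/

open Matrix

/-- The complex Frobenius inner product `⟨A, B⟩ = trace(A* B)`. -/
noncomputable def cfrobInner {m n : ℕ} (A B : Matrix (Fin m) (Fin n) ℂ) : ℂ :=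
  (Aᴴ * B).trace

open Set

theorem Matrix.hasDerivAt_iff {m n α : Type*} [Fintype n] [NormedAddCommGroup α]
    [NormedSpace ℝ α] {A : ℝ → Matrix m n α} {A' : Matrix m n α} {t : ℝ} :
    HasDerivAt A A' t ↔ ∀ i j, HasDerivAt (fun s => A s i j) (A' i j) t :=
  hasDerivAt_pi.trans (forall_congr' fun _ => hasDerivAt_pi)

section

attribute [local instance] Matrix.normedAddCommGroup Matrix.normedSpace

theorem LinearMap.hasDerivAt_matrix_comp {𝕜 m n p q : Type*} [RCLike 𝕜]
    [Fintype m] [Fintype n] [Fintype p] [Fintype q] (G : Matrix m n 𝕜 →ₗ[𝕜] Matrix p q 𝕜)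
    {A : ℝ → Matrix m n 𝕜} {A' : Matrix m n 𝕜} {t : ℝ} (hA : HasDerivAt A A' t) :
    HasDerivAt (fun s => G (A s)) (G A') t :=
  (G.restrictScalars ℝ).toContinuousLinearMap.hasFDerivAt.comp_hasDerivAt t hA

end

theorem eq_of_hasDerivAt_zero_on_Icc {E : Type*} [NormedAddCommGroup E] [NormedSpace ℝ E]
    {f : ℝ → E} {a b : ℝ} (hf : ∀ x ∈ Icc a b, HasDerivAt f 0 x) :
    ∀ x ∈ Icc a b, f x = f a :=
  constant_of_has_deriv_right_zero
    (fun x hx => (hf x hx).continuousAt.continuousWithinAt)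
    (fun x hx => (hf x (Ico_subset_Icc_self hx)).hasDerivWithinAt)

def Matrix.sandwich {R m n k l : Type*} [CommSemiring R] [Fintype k] [Fintype l]
    (U : Matrix m k R) (W : Matrix l n R) : Matrix k l R →ₗ[R] Matrix m n R where
  toFun X := U * X * W
  map_add' X Y := by rw [Matrix.mul_add, Matrix.add_mul]
  map_smul' c X := by rw [Matrix.mul_smul, Matrix.smul_mul, RingHom.id_apply]

section cfrobInner

variable {m n k l : ℕ}

theorem cfrobInner_eq_sum (A B : Matrix (Fin m) (Fin n) ℂ) :
    cfrobInner A B = ∑ j, ∑ i, star (A i j) * B i j := by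
  simp [cfrobInner, Matrix.trace, Matrix.mul_apply, conjTranspose_apply]

theorem cfrobInner_smul_left (c : ℂ) (A B : Matrix (Fin m) (Fin n) ℂ) :
    cfrobInner (c • A) B = star c * cfrobInner A B := by
  rw [cfrobInner, conjTranspose_smul, Matrix.smul_mul, trace_smul, smul_eq_mul, cfrobInner]

theorem cfrobInner_smul_right (c : ℂ) (A B : Matrix (Fin m) (Fin n) ℂ) :
    cfrobInner A (c • B) = c * cfrobInner A B := by
  rw [cfrobInner, Matrix.mul_smul, trace_smul, smul_eq_mul, cfrobInner]

theorem cfrobInner_mul_mul_left (U : Matrix (Fin m) (Fin k) ℂ) (X : Matrix (Fin k) (Fin l) ℂ)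
    (W : Matrix (Fin l) (Fin n) ℂ) (B : Matrix (Fin m) (Fin n) ℂ) :
    cfrobInner (U * X * W) B = cfrobInner X (Uᴴ * B * Wᴴ) := by
  simp only [cfrobInner, conjTranspose_mul, Matrix.mul_assoc]
  rw [trace_mul_comm]
  simp only [Matrix.mul_assoc]

theorem cfrobInner_mul_mul_right (B : Matrix (Fin m) (Fin n) ℂ) (U : Matrix (Fin m) (Fin k) ℂ)
    (X : Matrix (Fin k) (Fin l) ℂ) (W : Matrix (Fin l) (Fin n) ℂ) :
    cfrobInner B (U * X * W) = cfrobInner (Uᴴ * B * Wᴴ) X := by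
  simp only [cfrobInner, conjTranspose_mul, conjTranspose_conjTranspose, ← Matrix.mul_assoc]
  rw [trace_mul_comm]
  simp only [Matrix.mul_assoc]

theorem HasDerivAt.cfrobInner {A B : ℝ → Matrix (Fin m) (Fin n) ℂ}
    {A' B' : Matrix (Fin m) (Fin n) ℂ} {t : ℝ} (hA : HasDerivAt A A' t) (hB : HasDerivAt B B' t) :
    HasDerivAt (fun s => cfrobInner (A s) (B s))
      (cfrobInner A' (B t) + cfrobInner (A t) B') t := by
  simp only [cfrobInner_eq_sum, ← Finset.sum_add_distrib]
  rw [Matrix.hasDerivAt_iff] at hA hB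
  exact HasDerivAt.fun_sum fun j _ => HasDerivAt.fun_sum fun i _ =>
    (hA i j).star.mul (hB i j)

theorem cfrobInner_galerkin_schroedinger_add_eq_zero
    (H : Matrix (Fin m) (Fin n) ℂ →ₗ[ℂ] Matrix (Fin m) (Fin n) ℂ)
    (hH : ∀ Y Z, cfrobInner (H Y) Z = cfrobInner Y (H Z))
    (U : Matrix (Fin m) (Fin k) ℂ) (W : Matrix (Fin l) (Fin n) ℂ) (Y : Matrix (Fin m) (Fin n) ℂ) :
    cfrobInner (U * ((-Complex.I) • (Uᴴ * H Y * Wᴴ)) * W) (H Y)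
      + cfrobInner Y (H (U * ((-Complex.I) • (Uᴴ * H Y * Wᴴ)) * W)) = 0 := by
  rw [← hH Y, cfrobInner_mul_mul_left U _ W, cfrobInner_mul_mul_right _ U _ W,
    cfrobInner_smul_left, cfrobInner_smul_right, star_neg, Complex.star_def, Complex.conj_I]
  ring

end cfrobInner

theorem sStep_schroedinger_energy_conservation_general
    {m n k : ℕ} {t0 t1 : ℝ}
    (H : Matrix (Fin m) (Fin n) ℂ →ₗ[ℂ] Matrix (Fin m) (Fin n) ℂ)
    (hH : ∀ Y Z, cfrobInner (H Y) Z = cfrobInner Y (H Z))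
    (Uhat : Matrix (Fin m) (Fin k) ℂ) (Vhat : Matrix (Fin n) (Fin k) ℂ)
    (S : ℝ → Matrix (Fin k) (Fin k) ℂ)
    (hS : ∀ t ∈ Set.Icc t0 t1, ∀ i j,
      HasDerivAt (fun s => S s i j)
        (((-Complex.I) • (Uhatᴴ * H (Uhat * S t * Vhatᴴ) * Vhat)) i j) t) :
    ∀ t ∈ Set.Icc t0 t1,
      cfrobInner (Uhat * S t * Vhatᴴ) (H (Uhat * S t * Vhatᴴ))
        = cfrobInner (Uhat * S t0 * Vhatᴴ) (H (Uhat * S t0 * Vhatᴴ)) := by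
  refine eq_of_hasDerivAt_zero_on_Icc fun t ht => ?_
  have hY := (Uhat.sandwich Vhatᴴ).hasDerivAt_matrix_comp (Matrix.hasDerivAt_iff.mpr (hS t ht))
  have hE := hY.cfrobInner (H.hasDerivAt_matrix_comp hY)
  have hzero := cfrobInner_galerkin_schroedinger_add_eq_zero H hH Uhat Vhatᴴ (Uhat * S t * Vhatᴴ)
  rw [conjTranspose_conjTranspose] at hzero
  exact hzero ▸ hE

/-- Core of Theorem 6: the Galerkin S-step of the complex rank-adaptive integrator applied
to the matrix Schrödinger equation `i Ȧ = H[A]` conserves the energy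
`E(Ŷ(t)) = ⟨Ŷ(t), H[Ŷ(t)]⟩` exactly. -/
theorem sStep_schroedinger_energy_conservation
    {m n k : ℕ} {t0 t1 : ℝ}
    (H : Matrix (Fin m) (Fin n) ℂ →ₗ[ℂ] Matrix (Fin m) (Fin n) ℂ)
    (hH : ∀ Y Z, cfrobInner (H Y) Z = cfrobInner Y (H Z))
    (Uhat : Matrix (Fin m) (Fin k) ℂ) (Vhat : Matrix (Fin n) (Fin k) ℂ)
    (hU : Uhatᴴ * Uhat = 1) (hV : Vhatᴴ * Vhat = 1)
    (S : ℝ → Matrix (Fin k) (Fin k) ℂ)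
    (hS : ∀ t ∈ Set.Icc t0 t1, ∀ i j,
      HasDerivAt (fun s => S s i j)
        (((-Complex.I) • (Uhatᴴ * H (Uhat * S t * Vhatᴴ) * Vhat)) i j) t) :
    ∀ t ∈ Set.Icc t0 t1,
      cfrobInner (Uhat * S t * Vhatᴴ) (H (Uhat * S t * Vhatᴴ))
        = cfrobInner (Uhat * S t0 * Vhatᴴ) (H (Uhat * S t0 * Vhatᴴ)) :=
  sStep_schroedinger_energy_conservation_general H hH Uhat Vhat S hS
end

section
/- Let H : ℂ^{m×n} → ℂ^{m×n} be linear and self-adjoint with respect to the complex Frobenius inner product, and define E(Y) = ⟨Y, H[Y]⟩. Let Û ∈ ℂ^{m×k}, V̂ ∈ ℂ^{n×k} satisfy Û*Û = I_k, V̂*V̂ = I_k, and let S : ℝ → ℂ^{k×k} be differentiable on [t0, t1] with S'(t) = −i Û* H[Û S(t) V̂*] V̂. Suppose Y0 = Û S(t0) V̂*, set Ŷ1 = Û S(t1) V̂*, and let Y1 ∈ ℂ^{m×n} satisfy ‖Y1 − Ŷ1‖_F ≤ ϑ. Then |E(Y1) − E(Y0)| ≤ ϑ · ‖H[Y1] +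 H[Ŷ1]‖_F. -/
open Matrix

noncomputable def cfrobNorm {m n : ℕ} (A : Matrix (Fin m) (Fin n) ℂ) : ℝ :=
  Real.sqrt (cfrobInner A A).re

/-!
Write `L S = Û S V̂*`. The equation for `S` is the Schrödinger equation `i Ṡ = K S` for the
compressed Hamiltonian `K = L† H L`, which is again self-adjoint, so `⟨S, K S⟩ = E(L S)` is
conserved along the flow and `E(Ŷ₁) = E(Y₀)`. For self-adjoint `H` the cross terms of
`⟨Y₁ - Ŷ₁, H Y₁ + H Ŷ₁⟩` are complex conjugates of each other, so its real part is exactly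
`E(Y₁) - E(Ŷ₁)`, and Cauchy–Schwarz bounds it by `ϑ ‖H Y₁ + H Ŷ₁‖`.
-/

open scoped InnerProductSpace ComplexConjugate

namespace LinearMap.IsSymmetric

section RCLike

variable {𝕜 E : Type*} [RCLike 𝕜] [NormedAddCommGroup E] [InnerProductSpace 𝕜 E]
  {T : E →ₗ[𝕜] E}

theorem coe_re_inner_sub_map_add_map (hT : T.IsSymmetric) (x y : E) :
    (RCLike.re ⟪y - x, T y + T x⟫_𝕜 : 𝕜) = ⟪y, T y⟫_𝕜 - ⟪x, T x⟫_𝕜 := by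
  have hcross : RCLike.re ⟪y, T x⟫_𝕜 = RCLike.re ⟪x, T y⟫_𝕜 := by
    rw [← hT, ← inner_conj_symm, RCLike.conj_re]
  rw [inner_sub_left, inner_add_right, inner_add_right, map_sub, map_add, map_add, hcross]
  push_cast
  simp only [hT.coe_re_inner_self_apply]
  ring

theorem norm_inner_self_apply_sub_le (hT : T.IsSymmetric) (x y : E) :
    ‖⟪y, T y⟫_𝕜 - ⟪x, T x⟫_𝕜‖ ≤ ‖y - x‖ * ‖T y + T x‖ := by
  rw [← hT.coe_re_inner_sub_map_add_map, RCLike.norm_ofReal]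
  exact (RCLike.abs_re_le_norm _).trans (norm_inner_le_norm _ _)

end RCLike

variable {E : Type*} [NormedAddCommGroup E] [InnerProductSpace ℂ E] [CompleteSpace E]
  {K : E →ₗ[ℂ] E}

theorem hasDerivAt_inner_self_apply_of_schroedinger (hK : K.IsSymmetric) {ψ : ℝ → E} {t : ℝ}
    (hψ : HasDerivAt ψ (-Complex.I • K (ψ t)) t) :
    HasDerivAt (fun s => ⟪ψ s, K (ψ s)⟫_ℂ) 0 t := by
  have hKψ : HasDerivAt (fun s => K (ψ s)) (K (-Complex.I • K (ψ t))) t :=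
    (ContinuousLinearMap.restrictScalars ℝ ⟨K, hK.continuous⟩).hasFDerivAt.comp_hasDerivAt t hψ
  refine (hψ.inner ℂ hKψ).congr_deriv ?_
  rw [map_smul, inner_smul_right, inner_smul_left, ← hK, Complex.conj_neg_I]
  ring

theorem inner_self_apply_eq_of_schroedinger (hK : K.IsSymmetric) {ψ : ℝ → E} {a b : ℝ}
    (hab : a ≤ b) (hψ : ∀ t ∈ Set.Icc a b, HasDerivAt ψ (-Complex.I • K (ψ t)) t) :
    ⟪ψ b, K (ψ b)⟫_ℂ = ⟪ψ a, K (ψ a)⟫_ℂ := by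
  have hE := fun t ht => hK.hasDerivAt_inner_self_apply_of_schroedinger (hψ t ht)
  exact constant_of_has_deriv_right_zero
    (fun t ht => (hE t ht).continuousAt.continuousWithinAt)
    (fun t ht => (hE t (Set.mem_Icc_of_Ico ht)).hasDerivWithinAt) b ⟨hab, le_rfl⟩

end LinearMap.IsSymmetric

namespace Matrix

variable {𝕜 m n k l : Type*} [RCLike 𝕜] [Fintype k] [Fintype l]

noncomputable def sandwichLinearMap (U : Matrix m k 𝕜) (V : Matrix n l 𝕜) :
    Matrix k l 𝕜 →ₗ[𝕜] Matrix m n 𝕜 where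
  toFun X := U * X * Vᴴ
  map_add' X Y := by rw [Matrix.mul_add, Matrix.add_mul]
  map_smul' c X := by rw [Matrix.mul_smul, Matrix.smul_mul]; rfl

@[simp]
theorem sandwichLinearMap_apply (U : Matrix m k 𝕜) (V : Matrix n l 𝕜) (X : Matrix k l 𝕜) :
    sandwichLinearMap U V X = U * X * Vᴴ := rfl

variable [Fintype m] [Fintype n]

attribute [local instance] frobeniusNormedAddCommGroup frobeniusNormedSpace

noncomputable abbrev frobeniusInnerProductSpace : InnerProductSpace 𝕜 (Matrix m n 𝕜) where
  inner A B := (Aᴴ * B).trace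
  norm_sq_eq_re_inner A := by
    rw [frobenius_norm_def, ← Real.sqrt_eq_rpow, Real.sq_sqrt (by positivity), trace,
      Finset.sum_comm]
    simp only [diag_apply, mul_apply, conjTranspose_apply, RCLike.star_def, RCLike.conj_mul,
      map_sum]
    norm_cast
  conj_inner_symm A B := by
    show conj (Bᴴ * A).trace = (Aᴴ * B).trace
    rw [starRingEnd_apply, ← trace_conjTranspose, conjTranspose_mul, conjTranspose_conjTranspose]
  add_left A B C := by simp only [conjTranspose_add, Matrix.add_mul, trace_add]
  smul_left A B c := by simp only [conjTranspose_smul, smul_mul, trace_smul]; rfl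

attribute [local instance] frobeniusInnerProductSpace

theorem adjoint_sandwichLinearMap (U : Matrix m k 𝕜) (V : Matrix n l 𝕜) :
    (sandwichLinearMap U V).adjoint = sandwichLinearMap Uᴴ Vᴴ := by
  refine ((LinearMap.eq_adjoint_iff _ _).2 fun Z X => ?_).symm
  show ((Uᴴ * Z * Vᴴᴴ)ᴴ * X).trace = (Zᴴ * (U * X * Vᴴ)).trace
  simp only [conjTranspose_mul, conjTranspose_conjTranspose, Matrix.mul_assoc]
  rw [trace_mul_comm Vᴴ]
  simp only [Matrix.mul_assoc]

end Matrix

attribute [local instance] Matrix.frobeniusNormedAddCommGroup Matrix.frobeniusNormedSpace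
  Matrix.frobeniusInnerProductSpace

theorem cfrobInner_eq_inner {m n : ℕ} (A B : Matrix (Fin m) (Fin n) ℂ) :
    cfrobInner A B = ⟪A, B⟫_ℂ := rfl

theorem cfrobNorm_eq_norm {m n : ℕ} (A : Matrix (Fin m) (Fin n) ℂ) : cfrobNorm A = ‖A‖ :=
  (norm_eq_sqrt_re_inner (𝕜 := ℂ) A).symm

theorem rank_adaptive_schroedinger_energy_general
    {m n k : ℕ} {t0 t1 ϑ : ℝ}
    (H : Matrix (Fin m) (Fin n) ℂ →ₗ[ℂ] Matrix (Fin m) (Fin n) ℂ)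
    (hH : ∀ Y Z, cfrobInner (H Y) Z = cfrobInner Y (H Z))
    (Uhat : Matrix (Fin m) (Fin k) ℂ) (Vhat : Matrix (Fin n) (Fin k) ℂ)
    (S : ℝ → Matrix (Fin k) (Fin k) ℂ)
    (ht : t0 ≤ t1)
    (hS : ∀ t ∈ Set.Icc t0 t1, ∀ i j,
      HasDerivAt (fun s => S s i j)
        (((-Complex.I) • (Uhatᴴ * H (Uhat * S t * Vhatᴴ) * Vhat)) i j) t)
    (Y0 Yhat1 Y1 : Matrix (Fin m) (Fin n) ℂ)
    (hY0 : Y0 = Uhat * S t0 * Vhatᴴ)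
    (hYhat1 : Yhat1 = Uhat * S t1 * Vhatᴴ)
    (hY1 : cfrobNorm (Y1 - Yhat1) ≤ ϑ) :
    ‖cfrobInner Y1 (H Y1) - cfrobInner Y0 (H Y0)‖
      ≤ ϑ * cfrobNorm (H Y1 + H Yhat1) := by
  have hHsymm : H.IsSymmetric := hH
  set L := sandwichLinearMap Uhat Vhat
  have hflow : ∀ t ∈ Set.Icc t0 t1,
      HasDerivAt S (-Complex.I • (L.adjoint ∘ₗ H ∘ₗ L) (S t)) t := by
    intro t ht
    have hK : (L.adjoint ∘ₗ H ∘ₗ L) (S t) = Uhatᴴ * H (Uhat * S t * Vhatᴴ) * Vhat := by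
      simp only [LinearMap.comp_apply, adjoint_sandwichLinearMap, sandwichLinearMap_apply,
        conjTranspose_conjTranspose, L]
    rw [hK]
    exact hasDerivAt_pi.2 fun i => hasDerivAt_pi.2 (hS t ht i)
  have henergy : cfrobInner Yhat1 (H Yhat1) = cfrobInner Y0 (H Y0) := by
    have hconserved := (hHsymm.adjoint_conj L).inner_self_apply_eq_of_schroedinger ht hflow
    simp only [LinearMap.comp_apply, LinearMap.adjoint_inner_right] at hconserved
    rw [hY0, hYhat1, cfrobInner_eq_inner, cfrobInner_eq_inner]
    exact hconserved
  rw [cfrobNorm_eq_norm] at hY1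
  rw [← henergy, cfrobInner_eq_inner, cfrobInner_eq_inner, cfrobNorm_eq_norm]
  calc _ ≤ ‖Y1 - Yhat1‖ * ‖H Y1 + H Yhat1‖ := hHsymm.norm_inner_self_apply_sub_le Yhat1 Y1
    _ ≤ ϑ * ‖H Y1 + H Yhat1‖ := mul_le_mul_of_nonneg_right hY1 (norm_nonneg _)

/-- Theorem 6: one step of the rank-adaptive integrator applied to the matrix Schrödinger
equation `i Ȧ = H[A]` preserves the energy `E(Y) = ⟨Y, H[Y]⟩` up to
`ϑ · ‖H[Y₁] + H[Ŷ₁]‖_F`. -/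
theorem rank_adaptive_schroedinger_energy
    {m n k : ℕ} {t0 t1 ϑ : ℝ}
    (H : Matrix (Fin m) (Fin n) ℂ →ₗ[ℂ] Matrix (Fin m) (Fin n) ℂ)
    (hH : ∀ Y Z, cfrobInner (H Y) Z = cfrobInner Y (H Z))
    (Uhat : Matrix (Fin m) (Fin k) ℂ) (Vhat : Matrix (Fin n) (Fin k) ℂ)
    (hU : Uhatᴴ * Uhat = 1) (hV : Vhatᴴ * Vhat = 1)
    (S : ℝ → Matrix (Fin k) (Fin k) ℂ)
    (ht : t0 ≤ t1)
    (hS : ∀ t ∈ Set.Icc t0 t1, ∀ i j,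
      HasDerivAt (fun s => S s i j)
        (((-Complex.I) • (Uhatᴴ * H (Uhat * S t * Vhatᴴ) * Vhat)) i j) t)
    (Y0 Yhat1 Y1 : Matrix (Fin m) (Fin n) ℂ)
    (hY0 : Y0 = Uhat * S t0 * Vhatᴴ)
    (hYhat1 : Yhat1 = Uhat * S t1 * Vhatᴴ)
    (hY1 : cfrobNorm (Y1 - Yhat1) ≤ ϑ) :
    ‖cfrobInner Y1 (H Y1) - cfrobInner Y0 (H Y0)‖
      ≤ ϑ * cfrobNorm (H Y1 + H Yhat1) :=
  rank_adaptive_schroedinger_energy_general H hH Uhat Vhat S ht hS Y0 Yhat1 Y1 hY0 hYhat1 hY1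
end

section
/- Let H : ℝ^{m×n} × ℝ^{m×n} → ℝ be continuously differentiable, and for (Q, P) let (∇_Q H(Q,P), ∇_P H(Q,P)) denote the Frobenius gradients, i.e., the Fréchet derivative of H at (Q,P) applied to (X, Y) equals ⟨∇_Q H(Q,P), X⟩_F + ⟨∇_P H(Q,P), Y⟩_F. Let Û ∈ ℂ^{m×k}, V̂ ∈ ℂ^{n×k} satisfy Û*Û = I_k, V̂*V̂ = I_k, and let S : ℝ → ℂ^{k×k} be differentiable on [t0, t1] such that, with Ẑ(t) = Û S(t) V̂*, Q(t) = Re Ẑ(t), P(t) = Im Ẑ(t) (entrywise real and imaginary parts), S satisfies S'(t) = −i Û* (∇_Q H(Q(t),P(t)) + i ∇_P H(Q(t),P(t))) V̂, where the real gradient matrices are regarded as complex matrices. Then H(Q(t), P(t)) is constant on [t0, t1]. -/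
/-! With `G = ∇_Q H + i ∇_P H`, the chain rule gives `d/dt H(Re Z, Im Z) = Re ⟨G, Ż⟩`. Along the
S-step `Ż = Û (-i Û* G V̂) V̂*`, so `⟨G, Ż⟩ = -i ‖Û* G V̂‖²` is purely imaginary. -/

open Matrix

attribute [local instance] Matrix.frobeniusSeminormedAddCommGroup
  Matrix.frobeniusNormedAddCommGroup Matrix.frobeniusNormedSpace

namespace Matrix

theorem hasDerivAt_of_entries {m n 𝕜 E : Type*} [Fintype m] [Fintype n]
    [NontriviallyNormedField 𝕜] [NormedAddCommGroup E] [NormedSpace 𝕜 E]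
    {f : 𝕜 → Matrix m n E} {f' : Matrix m n E} {t : 𝕜}
    (h : ∀ i j, HasDerivAt (fun s => f s i j) (f' i j) t) : HasDerivAt f f' t :=
  hasDerivAt_pi.2 fun i => hasDerivAt_pi.2 (h i)

theorem hasDerivAt_mul_mul_entry {l m n o 𝕜 𝔸 : Type*} [Fintype m] [Fintype n]
    [NontriviallyNormedField 𝕜] [NormedRing 𝔸] [NormedAlgebra 𝕜 𝔸]
    (A : Matrix l m 𝔸) (B : Matrix n o 𝔸) {S : 𝕜 → Matrix m n 𝔸} {S' : Matrix m n 𝔸} {t : 𝕜}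
    (h : ∀ i j, HasDerivAt (fun s => S s i j) (S' i j) t)
    (i : l) (j : o) : HasDerivAt (fun s => (A * S s * B) i j) ((A * S' * B) i j) t := by
  simp only [mul_apply]
  exact HasDerivAt.fun_sum fun c _ =>
    (HasDerivAt.fun_sum fun a _ => (h a c).const_mul (A i a)).mul_const (B c j)

theorem im_trace_conjTranspose_mul_self {m n : Type*} [Fintype m] [Fintype n]
    (M : Matrix m n ℂ) : (Mᴴ * M).trace.im = 0 := by
  rw [← Complex.conj_eq_iff_im]
  simpa using (trace_conjTranspose (Mᴴ * M)).symm

end Matrix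

theorem frobInner_map_re_add_frobInner_map_im {m n : ℕ} (A B : Matrix (Fin m) (Fin n) ℝ)
    (W : Matrix (Fin m) (Fin n) ℂ) :
    frobInner A (W.map Complex.re) + frobInner B (W.map Complex.im)
      = ((A.map Complex.ofReal + Complex.I • B.map Complex.ofReal)ᴴ * W).trace.re := by
  simp only [frobInner, trace, diag, mul_apply, transpose_apply, conjTranspose_apply, map_apply,
    Matrix.add_apply, Matrix.smul_apply, Complex.re_sum, ← Finset.sum_add_distrib]
  refine Finset.sum_congr rfl fun j _ => Finset.sum_congr rfl fun i _ => ?_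
  simp [Complex.mul_re]

theorem hasDerivAt_comp_map_re_im {m n : ℕ}
    {H : Matrix (Fin m) (Fin n) ℝ × Matrix (Fin m) (Fin n) ℝ → ℝ}
    {A B : Matrix (Fin m) (Fin n) ℝ} {Z : ℝ → Matrix (Fin m) (Fin n) ℂ}
    {Z' : Matrix (Fin m) (Fin n) ℂ} {t : ℝ}
    (hH : DifferentiableAt ℝ H ((Z t).map Complex.re, (Z t).map Complex.im))
    (hgrad : ∀ X Y, fderiv ℝ H ((Z t).map Complex.re, (Z t).map Complex.im) (X, Y)
      = frobInner A X + frobInner B Y)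
    (hZ : ∀ i j, HasDerivAt (fun s => Z s i j) (Z' i j) t) :
    HasDerivAt (fun s => H ((Z s).map Complex.re, (Z s).map Complex.im))
      ((A.map Complex.ofReal + Complex.I • B.map Complex.ofReal)ᴴ * Z').trace.re t := by
  have hre : HasDerivAt (fun s => (Z s).map Complex.re) (Z'.map Complex.re) t :=
    hasDerivAt_of_entries fun i j => Complex.reCLM.hasFDerivAt.comp_hasDerivAt t (hZ i j)
  have him : HasDerivAt (fun s => (Z s).map Complex.im) (Z'.map Complex.im) t :=
    hasDerivAt_of_entries fun i j => Complex.imCLM.hasFDerivAt.comp_hasDerivAt t (hZ i j)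
  exact (hH.hasFDerivAt.comp_hasDerivAt t (hre.prodMk him)).congr_deriv
    ((hgrad _ _).trans (frobInner_map_re_add_frobInner_map_im A B Z'))

noncomputable def galerkinVelocity {m n k : Type*} [Fintype m] [Fintype n] [Fintype k]
    (U : Matrix m k ℂ) (V : Matrix n k ℂ) (G : Matrix m n ℂ) : Matrix m n ℂ :=
  U * (-Complex.I • (Uᴴ * G * V)) * Vᴴ

theorem re_trace_conjTranspose_mul_galerkinVelocity {m n k : Type*} [Fintype m] [Fintype n]
    [Fintype k] (U : Matrix m k ℂ) (V : Matrix n k ℂ) (G : Matrix m n ℂ) :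
    (Gᴴ * galerkinVelocity U V G).trace.re = 0 := by
  set M := Uᴴ * G * V
  have hM : (Gᴴ * galerkinVelocity U V G).trace = -Complex.I * (Mᴴ * M).trace := by
    rw [galerkinVelocity, Matrix.mul_smul, Matrix.smul_mul, Matrix.mul_smul, trace_smul,
      smul_eq_mul, ← Matrix.mul_assoc, ← Matrix.mul_assoc, trace_mul_comm]
    simp only [M, conjTranspose_mul, conjTranspose_conjTranspose, Matrix.mul_assoc]
  simp [hM, im_trace_conjTranspose_mul_self]

theorem sStep_hamiltonian_conservation_general
    {m n k : ℕ} {t0 t1 : ℝ}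
    (H : Matrix (Fin m) (Fin n) ℝ × Matrix (Fin m) (Fin n) ℝ → ℝ)
    (GQ GP : Matrix (Fin m) (Fin n) ℝ × Matrix (Fin m) (Fin n) ℝ → Matrix (Fin m) (Fin n) ℝ)
    (hH : Differentiable ℝ H)
    (hgrad : ∀ QP : Matrix (Fin m) (Fin n) ℝ × Matrix (Fin m) (Fin n) ℝ,
      ∀ X Y : Matrix (Fin m) (Fin n) ℝ,
        fderiv ℝ H QP (X, Y) = frobInner (GQ QP) X + frobInner (GP QP) Y)
    (Uhat : Matrix (Fin m) (Fin k) ℂ) (Vhat : Matrix (Fin n) (Fin k) ℂ)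
    (S : ℝ → Matrix (Fin k) (Fin k) ℂ)
    (Q P : ℝ → Matrix (Fin m) (Fin n) ℝ)
    (hQ : ∀ t, Q t = (Uhat * S t * Vhatᴴ).map Complex.re)
    (hP : ∀ t, P t = (Uhat * S t * Vhatᴴ).map Complex.im)
    (hS : ∀ t ∈ Set.Icc t0 t1, ∀ i j,
      HasDerivAt (fun s => S s i j)
        (((-Complex.I) • (Uhatᴴ *
          ((GQ (Q t, P t)).map Complex.ofReal
            + Complex.I • (GP (Q t, P t)).map Complex.ofReal) * Vhat)) i j) t) :
    ∀ t ∈ Set.Icc t0 t1, H (Q t, P t) = H (Q t0, P t0) := by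
  obtain rfl : Q = fun t => (Uhat * S t * Vhatᴴ).map Complex.re := funext hQ
  obtain rfl : P = fun t => (Uhat * S t * Vhatᴴ).map Complex.im := funext hP
  have hconst : ∀ t ∈ Set.Icc t0 t1, HasDerivAt
      (fun s => H ((Uhat * S s * Vhatᴴ).map Complex.re, (Uhat * S s * Vhatᴴ).map Complex.im))
      0 t := fun t ht =>
    (hasDerivAt_comp_map_re_im (hH _) (hgrad _)
      (Matrix.hasDerivAt_mul_mul_entry Uhat Vhatᴴ (hS t ht))).congr_deriv
      (re_trace_conjTranspose_mul_galerkinVelocity Uhat Vhat _)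
  exact fun t ht => constant_of_has_deriv_right_zero
    (fun s hs => (hconst s hs).continuousAt.continuousWithinAt)
    (fun s hs => (hconst s (Set.mem_Icc_of_Ico hs)).hasDerivWithinAt) t ht

/-- Core of Theorem 7: the Galerkin S-step of the complex rank-adaptive integrator applied
to the Schrödinger-form reformulation `i Ż = ∇_Q H + i ∇_P H` of the Hamiltonian system
conserves the Hamiltonian `H(Q(t), P(t))` exactly. -/
theorem sStep_hamiltonian_conservation
    {m n k : ℕ} {t0 t1 : ℝ}
    (H : Matrix (Fin m) (Fin n) ℝ × Matrix (Fin m) (Fin n) ℝ → ℝ)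
    (GQ GP : Matrix (Fin m) (Fin n) ℝ × Matrix (Fin m) (Fin n) ℝ → Matrix (Fin m) (Fin n) ℝ)
    (hH : Differentiable ℝ H)
    (hgrad : ∀ QP : Matrix (Fin m) (Fin n) ℝ × Matrix (Fin m) (Fin n) ℝ,
      ∀ X Y : Matrix (Fin m) (Fin n) ℝ,
        fderiv ℝ H QP (X, Y) = frobInner (GQ QP) X + frobInner (GP QP) Y)
    (Uhat : Matrix (Fin m) (Fin k) ℂ) (Vhat : Matrix (Fin n) (Fin k) ℂ)
    (hU : Uhatᴴ * Uhat = 1) (hV : Vhatᴴ * Vhat = 1)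
    (S : ℝ → Matrix (Fin k) (Fin k) ℂ)
    (Q P : ℝ → Matrix (Fin m) (Fin n) ℝ)
    (hQ : ∀ t, Q t = (Uhat * S t * Vhatᴴ).map Complex.re)
    (hP : ∀ t, P t = (Uhat * S t * Vhatᴴ).map Complex.im)
    (hS : ∀ t ∈ Set.Icc t0 t1, ∀ i j,
      HasDerivAt (fun s => S s i j)
        (((-Complex.I) • (Uhatᴴ *
          ((GQ (Q t, P t)).map Complex.ofReal
            + Complex.I • (GP (Q t, P t)).map Complex.ofReal) * Vhat)) i j) t) :
    ∀ t ∈ Set.Icc t0 t1, H (Q t, P t) = H (Q t0, P t0) :=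
  sStep_hamiltonian_conservation_general H GQ GP hH hgrad Uhat Vhat S Q P hQ hP hS
end
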